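/- Let γ₃ = [G, [G, G]] be the third term of the lower central series of G. The second derived subgroup G'' = [[G,G],[G,G]] of G equals the subgroup {⟨g, h⟩ : g, h ∈ γ₃} of all pairs of elements of γ₃ acting independently on the two maximal subtrees. -/

import Mathlib

-- The generators `a` and `b` of the iterated monodromy group of `z^2-1`,
-- as functions on binary words (`false` = x = left, `true` = y = right),
-- defined by mutual recursion.
mutual
def aFun : List Bool → List Bool
  | [] => []
  | false :: w => true :: bFun w
  | true :: w => false :: w

def bFun : List Bool → List Bool
  | [] => []
  | false :: w => false :: aFun w
  | true :: w => true :: w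
end

-- The inverses of `aFun`/`bFun`.
mutual
def aInv : List Bool → List Bool
  | [] => []
  | true :: w => false :: bInv w
  | false :: w => true :: w

def bInv : List Bool → List Bool
  | [] => []
  | false :: w => false :: aInv w
  | true :: w => true :: w
end

mutual
theorem aFun_aInv : ∀ w, aFun (aInv w) = w
  | [] => rfl
  | true :: w => by simp [aInv, aFun, bFun_bInv w]
  | false :: w => by simp [aInv, aFun]

theorem bFun_bInv : ∀ w, bFun (bInv w) = w
  | [] => rfl
  | false :: w => by simp [bInv, bFun, aFun_aInv w]
  | true :: w => by simp [bInv, bFun]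
end

mutual
theorem aInv_aFun : ∀ w, aInv (aFun w) = w
  | [] => rfl
  | false :: w => by simp [aFun, aInv, bInv_bFun w]
  | true :: w => by simp [aFun, aInv]

theorem bInv_bFun : ∀ w, bInv (bFun w) = w
  | [] => rfl
  | false :: w => by simp [bFun, bInv, aInv_aFun w]
  | true :: w => by simp [bFun, bInv]
end

/-- `a` as a permutation of the set of binary words. -/
def aPerm : Equiv.Perm (List Bool) := ⟨aFun, aInv, aInv_aFun, aFun_aInv⟩
/-- `b` as a permutation of the set of binary words. -/
def bPerm : Equiv.Perm (List Bool) := ⟨bFun, bInv, bInv_bFun, bFun_bInv⟩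

mutual
theorem aFun_length : ∀ w, (aFun w).length = w.length
  | [] => rfl
  | false :: w => by simp [aFun, bFun_length w]
  | true :: w => by simp [aFun]

theorem bFun_length : ∀ w, (bFun w).length = w.length
  | [] => rfl
  | false :: w => by simp [bFun, aFun_length w]
  | true :: w => by simp [bFun]
end

mutual
theorem aFun_prefix : ∀ u v, u <+: v → aFun u <+: aFun v
  | [], v, _ => by simp [aFun]
  | false :: u, false :: v, h => by
      simp only [List.cons_prefix_cons] at h
      simpa [aFun, List.cons_prefix_cons] using bFun_prefix u v h.2
  | true :: u, true :: v, h => by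
      simp only [List.cons_prefix_cons] at h
      simpa [aFun, List.cons_prefix_cons] using h.2
  | false :: u, true :: v, h => by simp [List.cons_prefix_cons] at h
  | true :: u, false :: v, h => by simp [List.cons_prefix_cons] at h
  | _ :: u, [], h => by simp at h

theorem bFun_prefix : ∀ u v, u <+: v → bFun u <+: bFun v
  | [], v, _ => by simp [bFun]
  | false :: u, false :: v, h => by
      simp only [List.cons_prefix_cons] at h
      simpa [bFun, List.cons_prefix_cons] using aFun_prefix u v h.2
  | true :: u, true :: v, h => by
      simp only [List.cons_prefix_cons] at h
      simpa [bFun, List.cons_prefix_cons] using h.2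
  | false :: u, true :: v, h => by simp [List.cons_prefix_cons] at h
  | true :: u, false :: v, h => by simp [List.cons_prefix_cons] at h
  | _ :: u, [], h => by simp at h
end

/-- The group of automorphisms of the binary rooted tree: bijections of the set of
binary words preserving word length and the prefix relation. -/
def treeAut : Subgroup (Equiv.Perm (List Bool)) where
  carrier := {f | (∀ w, (f w).length = w.length) ∧ ∀ u v : List Bool, u <+: v → f u <+: f v}
  one_mem' := ⟨fun _ => rfl, fun _ _ h => h⟩
  mul_mem' := by
    rintro f g ⟨hf1, hf2⟩ ⟨hg1, hg2⟩
    exact ⟨fun w => (hf1 _).trans (hg1 w), fun u v h => hf2 _ _ (hg2 _ _ h)⟩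
  inv_mem' := by
    rintro f ⟨hf1, hf2⟩
    constructor
    · intro w
      have := hf1 (f⁻¹ w)
      simpa using this.symm
    · intro u v h
      have hlen : (f⁻¹ u).length ≤ (f⁻¹ v).length := by
        have h1 : (f⁻¹ u).length = u.length := by have := hf1 (f⁻¹ u); simpa using this.symm
        have h2 : (f⁻¹ v).length = v.length := by have := hf1 (f⁻¹ v); simpa using this.symm
        rw [h1, h2]; exact h.length_le
      set p := (f⁻¹ v).take (f⁻¹ u).length with hp
      have hpv : p <+: f⁻¹ v := List.take_prefix _ _
      have hplen : p.length = (f⁻¹ u).length := by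
        simpa [hp, List.length_take, Nat.min_eq_left hlen] using hlen
      have hfp : f p <+: v := by
        have := hf2 _ _ hpv
        simpa using this
      have hfplen : (f p).length = u.length := by
        rw [hf1 p, hplen]
        have := hf1 (f⁻¹ u); simpa using this.symm
      have : f p = u := by
        rcases List.prefix_or_prefix_of_prefix hfp h with h' | h'
        · exact h'.eq_of_length hfplen
        · exact (h'.eq_of_length hfplen.symm).symm
      have : p = f⁻¹ u := by
        have := congrArg (f⁻¹ : Equiv.Perm (List Bool)) this
        simpa using this
      rw [← this]; exact hpv

/-- The generator `a` as a tree automorphism. -/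
def A : treeAut := ⟨aPerm, aFun_length, aFun_prefix⟩
/-- The generator `b` as a tree automorphism. -/
def B : treeAut := ⟨bPerm, bFun_length, bFun_prefix⟩

/-- The iterated monodromy group of `z ↦ z² - 1`: the subgroup of the automorphism
group of the binary rooted tree generated by `a` and `b`. -/
def G : Subgroup treeAut := Subgroup.closure {A, B}

/-- Apply a tree automorphism to a binary word. -/
def app (g : treeAut) (w : List Bool) : List Bool := g.val w

theorem app_inv_app (g : treeAut) (w : List Bool) : app g⁻¹ (app g w) = w := by
  show (g.val)⁻¹.toFun (g.val.toFun w) = w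
  simp

theorem app_app_inv (g : treeAut) (w : List Bool) : app g (app g⁻¹ w) = w := by
  show g.val.toFun ((g.val)⁻¹.toFun w) = w
  simp

/-- `⟨f, g⟩` on words: acts by `f` on the subtree below `x = false` and by `g`
on the subtree below `y = true`. -/
def pairFun (f g : List Bool → List Bool) : List Bool → List Bool
  | [] => []
  | false :: w => false :: f w
  | true :: w => true :: g w

/-- The tree automorphism `⟨g, h⟩` acting as `g` on the left subtree
and as `h` on the right subtree. -/
def pairAut (g h : treeAut) : treeAut := by
  refine ⟨⟨pairFun (app g) (app h), pairFun (app g⁻¹) (app h⁻¹), ?_, ?_⟩, ?_, ?_⟩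
  · intro w
    match w with
    | [] => rfl
    | false :: w => simp [pairFun, app_inv_app]
    | true :: w => simp [pairFun, app_inv_app]
  · intro w
    match w with
    | [] => rfl
    | false :: w => simp [pairFun, app_app_inv]
    | true :: w => simp [pairFun, app_app_inv]
  · intro w
    match w with
    | [] => rfl
    | false :: w => simpa [pairFun, app] using g.2.1 w
    | true :: w => simpa [pairFun, app] using h.2.1 w
  · intro u v huv
    match u, v, huv with
    | [], v, _ => exact List.nil_prefix
    | false :: u, false :: v, h' =>
        simp only [List.cons_prefix_cons] at h'
        show pairFun (app g) (app h) (false :: u) <+: pairFun (app g) (app h) (false :: v)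
        simpa [pairFun, app, List.cons_prefix_cons] using g.2.2 u v h'.2
    | true :: u, true :: v, h' =>
        simp only [List.cons_prefix_cons] at h'
        show pairFun (app g) (app h) (true :: u) <+: pairFun (app g) (app h) (true :: v)
        simpa [pairFun, app, List.cons_prefix_cons] using h.2.2 u v h'.2
    | false :: u, true :: v, h' => simp [List.cons_prefix_cons] at h'
    | true :: u, false :: v, h' => simp [List.cons_prefix_cons] at h'
    | _ :: u, [], h' => simp at h'

open Subgroup
open scoped commutatorElement

lemma app_mul (g h : treeAut) (w : List Bool) : app (g*h) w = app g (app h w) := rfl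
lemma app_one (w : List Bool) : app (1 : treeAut) w = w := rfl
lemma app_A (w : List Bool) : app A w = aFun w := rfl
lemma app_B (w : List Bool) : app B w = bFun w := rfl
lemma app_pairAut (g h : treeAut) (w : List Bool) :
    app (pairAut g h) w = pairFun (app g) (app h) w := rfl

lemma treeAut_ext {g h : treeAut} (H : ∀ w, app g w = app h w) : g = h :=
  Subtype.ext (Equiv.ext H)

lemma pairAut_mul (g h g' h' : treeAut) :
    pairAut (g*g') (h*h') = pairAut g h * pairAut g' h' := by
  apply treeAut_ext; intro w
  match w with
  | [] => rfl
  | false :: w => simp [app_mul, app_pairAut, pairFun]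
  | true :: w => simp [app_mul, app_pairAut, pairFun]

lemma pairAut_one : pairAut 1 1 = 1 := by
  apply treeAut_ext; intro w
  match w with
  | [] => rfl
  | false :: w => simp [app_pairAut, pairFun, app_one]
  | true :: w => simp [app_pairAut, pairFun, app_one]

lemma pairAut_inv (g h : treeAut) : (pairAut g h)⁻¹ = pairAut g⁻¹ h⁻¹ := by
  rw [eq_comm, eq_inv_iff_mul_eq_one, ← pairAut_mul]
  simp [pairAut_one]

lemma B_eq : B = pairAut A 1 := by
  apply treeAut_ext; intro w
  match w with
  | [] => rfl
  | false :: w => simp [app_B, bFun, app_pairAut, pairFun, app_A]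
  | true :: w => simp [app_B, bFun, app_pairAut, pairFun, app_one]

lemma A_mul_A : A * A = pairAut B B := by
  apply treeAut_ext; intro w
  match w with
  | [] => rfl
  | false :: w => simp [app_mul, app_A, aFun, app_pairAut, pairFun, app_B]
  | true :: w => simp [app_mul, app_A, aFun, app_pairAut, pairFun, app_B]

lemma conjA (u v : treeAut) : A * pairAut u v = pairAut v (B*u*B⁻¹) * A := by
  apply treeAut_ext; intro w
  match w with
  | [] => rfl
  | false :: w =>
      have h1 : app B⁻¹ (bFun w) = w := app_inv_app B w
      simp [app_mul, app_A, aFun, app_pairAut, pairFun, app_B, h1]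
  | true :: w => simp [app_mul, app_A, aFun, app_pairAut, pairFun]

lemma conjA_conj (u v : treeAut) : A * pairAut u v * A⁻¹ = pairAut v (B*u*B⁻¹) := by
  rw [conjA]; group

lemma conjA_inv (u v : treeAut) : A⁻¹ * pairAut u v * A = pairAut (B⁻¹*v*B) u := by
  have h := conjA_conj (B⁻¹*v*B) u
  have h2 : B*(B⁻¹*v*B)*B⁻¹ = v := by group
  rw [h2] at h
  calc A⁻¹ * pairAut u v * A
      = A⁻¹ * (A * pairAut (B⁻¹*v*B) u * A⁻¹) * A := by rw [h]
    _ = pairAut (B⁻¹*v*B) u := by group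

lemma conjB_conj (u v : treeAut) : B * pairAut u v * B⁻¹ = pairAut (A*u*A⁻¹) v := by
  rw [B_eq, pairAut_inv, ← pairAut_mul, ← pairAut_mul]; simp

lemma conjB_inv (u v : treeAut) : B⁻¹ * pairAut u v * B = pairAut (A⁻¹*u*A) v := by
  rw [B_eq, pairAut_inv, ← pairAut_mul, ← pairAut_mul]; simp

lemma C_eq : ⁅A, B⁆ = pairAut A⁻¹ (B*A*B⁻¹) := by
  rw [commutatorElement_def]
  calc A*B*A⁻¹*B⁻¹ = (A*(pairAut A 1)*A⁻¹) * (pairAut A 1)⁻¹ := by rw [← B_eq]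
    _ = pairAut 1 (B*A*B⁻¹) * pairAut A⁻¹ 1⁻¹ := by rw [conjA_conj, pairAut_inv]
    _ = pairAut A⁻¹ (B*A*B⁻¹) := by rw [← pairAut_mul, one_mul, inv_one, mul_one]

lemma BC_comm : ⁅B, ⁅A, B⁆⁆ = 1 := by
  rw [commutatorElement_eq_one_iff_mul_comm, C_eq, B_eq, ← pairAut_mul, ← pairAut_mul]
  simp

lemma pairC1 : pairAut ⁅A, B⁆ 1 = ⁅B, A*A⁆ := by
  have key : ∀ u : treeAut, u = A*B*A⁻¹*B⁻¹ → pairAut u 1 = ⁅B, A*A⁆ := by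
    intro u hu
    rw [commutatorElement_def, B_eq, A_mul_A, pairAut_inv, pairAut_inv,
      ← pairAut_mul, ← pairAut_mul, ← pairAut_mul]
    congr 1
    group
  exact key _ (commutatorElement_def A B)

lemma hA : A ∈ G := Subgroup.subset_closure (by simp)
lemma hB : B ∈ G := Subgroup.subset_closure (by simp)
lemma hG_eq : G = Subgroup.closure {A, B} := rfl

/-- `N` is normalized by `G`. -/
def Normd (N : Subgroup treeAut) : Prop := ∀ g ∈ G, ∀ n ∈ N, g * n * g⁻¹ ∈ N

lemma normd_G : Normd G := fun g hg n hn => mul_mem (mul_mem hg hn) (inv_mem hg)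

lemma normd_closure {S : Set treeAut} (h : ∀ g ∈ G, ∀ s ∈ S, g*s*g⁻¹ ∈ Subgroup.closure S) :
    Normd (Subgroup.closure S) := by
  intro g hg n hn
  induction hn using Subgroup.closure_induction with
  | mem x hx => exact h g hg x hx
  | one => simpa using one_mem _
  | mul x y hx hy px py =>
      have : g*(x*y)*g⁻¹ = (g*x*g⁻¹)*(g*y*g⁻¹) := by group
      rw [this]; exact mul_mem px py
  | inv x hx px =>
      have : g*x⁻¹*g⁻¹ = (g*x*g⁻¹)⁻¹ := by group
      rw [this]; exact inv_mem px

lemma normd_commutator {H K : Subgroup treeAut} (hH : Normd H) (hK : Normd K) :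
    Normd ⁅H, K⁆ := by
  rw [Subgroup.commutator_def]
  apply normd_closure
  rintro g hg s ⟨x, hx, y, hy, rfl⟩
  have : g*⁅x,y⁆*g⁻¹ = ⁅g*x*g⁻¹, g*y*g⁻¹⁆ := by
    simp only [commutatorElement_def]; group
  rw [this]
  exact Subgroup.subset_closure ⟨_, hH g hg x hx, _, hK g hg y hy, rfl⟩

lemma normd_G2 : Normd ⁅G, G⁆ := normd_commutator normd_G normd_G
lemma normd_G3 : Normd ⁅G, ⁅G, G⁆⁆ := normd_commutator normd_G normd_G2
lemma normd_D2 : Normd ⁅⁅G, G⁆, ⁅G, G⁆⁆ := normd_commutator normd_G2 normd_G2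

lemma G2_le_G : ⁅G, G⁆ ≤ G :=
  Subgroup.commutator_le.mpr fun g hg k hk =>
    mul_mem (mul_mem (mul_mem hg hk) (inv_mem hg)) (inv_mem hk)

lemma comm_le {S T : Set treeAut} (hS : Subgroup.closure S ≤ G) (hT : Subgroup.closure T ≤ G)
    {N : Subgroup treeAut} (hN : Normd N) (base : ∀ s ∈ S, ∀ t ∈ T, ⁅s, t⁆ ∈ N) :
    ⁅Subgroup.closure S, Subgroup.closure T⁆ ≤ N := by
  rw [Subgroup.commutator_le]
  intro g hg t ht
  induction hg using Subgroup.closure_induction with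
  | mem s hs =>
      induction ht using Subgroup.closure_induction with
      | mem t ht => exact base s hs t ht
      | one => rw [commutatorElement_one_right]; exact one_mem N
      | mul x y hx hy px py =>
          have : ⁅s, x*y⁆ = ⁅s,x⁆ * (x * ⁅s,y⁆ * x⁻¹) := by
            simp only [commutatorElement_def]; group
          rw [this]
          exact mul_mem px (hN x (hT hx) _ py)
      | inv x hx px =>
          have : ⁅s, x⁻¹⁆ = x⁻¹ * ⁅s,x⁆⁻¹ * x := by
            simp only [commutatorElement_def]; group
          rw [this]
          exact hN x⁻¹ (inv_mem (hT hx)) _ (inv_mem px)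
  | one => rw [commutatorElement_one_left]; exact one_mem N
  | mul x y hx hy px py =>
      have : ⁅x*y, t⁆ = (x * ⁅y,t⁆ * x⁻¹) * ⁅x,t⁆ := by
        simp only [commutatorElement_def]; group
      rw [this]
      exact mul_mem (hN x (hS hx) _ py) px
  | inv x hx px =>
      have : ⁅x⁻¹, t⁆ = x⁻¹ * ⁅x,t⁆⁻¹ * x := by
        simp only [commutatorElement_def]; group
      rw [this]
      exact hN x⁻¹ (inv_mem (hS hx)) _ (inv_mem px)

/-- Conjugates of `c = [a,b]` by elements of `G`. -/
def CSet : Set treeAut := {x | ∃ g ∈ G, g * ⁅A, B⁆ * g⁻¹ = x}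

lemma CSet_sub_G : ∀ x ∈ CSet, x ∈ G := by
  rintro x ⟨g, hg, rfl⟩
  exact mul_mem (mul_mem hg (mul_mem (mul_mem (mul_mem hA hB) (inv_mem hA)) (inv_mem hB)))
    (inv_mem hg)

lemma closure_CSet_le_G : Subgroup.closure CSet ≤ G :=
  (Subgroup.closure_le G).mpr CSet_sub_G

lemma gamma2_le {N : Subgroup treeAut} (hN : Normd N) (hC : ⁅A, B⁆ ∈ N) : ⁅G, G⁆ ≤ N := by
  rw [hG_eq]
  apply comm_le (le_of_eq hG_eq.symm) (le_of_eq hG_eq.symm) hN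
  rintro s (rfl | rfl) t (rfl | rfl)
  · rw [commutatorElement_self]; exact one_mem N
  · exact hC
  · rw [← commutatorElement_inv]; exact inv_mem hC
  · rw [commutatorElement_self]; exact one_mem N

lemma gamma2_eq : ⁅G, G⁆ = Subgroup.closure CSet := by
  apply le_antisymm
  · apply gamma2_le
    · apply normd_closure
      rintro g hg s ⟨k, hk, rfl⟩
      apply Subgroup.subset_closure
      exact ⟨g*k, mul_mem hg hk, by group⟩
    · exact Subgroup.subset_closure ⟨1, one_mem G, by group⟩
  · rw [Subgroup.closure_le]
    rintro x ⟨g, hg, rfl⟩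
    exact normd_G2 g hg _ (Subgroup.commutator_mem_commutator hA hB)

lemma commC_mem {N : Subgroup treeAut} (hN : Normd N) (hAC : ⁅A, ⁅A, B⁆⁆ ∈ N) :
    ∀ w ∈ G, ⁅w, ⁅A, B⁆⁆ ∈ N := by
  intro w hw
  induction hw using Subgroup.closure_induction with
  | mem s hs =>
      rcases hs with rfl | rfl
      · exact hAC
      · rw [BC_comm]; exact one_mem N
  | one => rw [commutatorElement_one_left]; exact one_mem N
  | mul x y hx hy px py =>
      have : ⁅x*y, ⁅A,B⁆⁆ = (x * ⁅y,⁅A,B⁆⁆ * x⁻¹) * ⁅x,⁅A,B⁆⁆ := by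
        simp only [commutatorElement_def]; group
      rw [this]
      exact mul_mem (hN x hx _ py) px
  | inv x hx px =>
      have : ⁅x⁻¹, ⁅A,B⁆⁆ = x⁻¹ * ⁅x,⁅A,B⁆⁆⁻¹ * x := by
        simp only [commutatorElement_def]; group
      rw [this]
      exact hN x⁻¹ (inv_mem hx) _ (inv_mem px)

lemma gamma3_le {N : Subgroup treeAut} (hN : Normd N) (hAC : ⁅A, ⁅A, B⁆⁆ ∈ N) :
    ⁅G, ⁅G, G⁆⁆ ≤ N := by
  rw [gamma2_eq, hG_eq]
  apply comm_le (le_of_eq hG_eq.symm) closure_CSet_le_G hN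
  rintro s hs t ⟨g, hg, rfl⟩
  have key : ⁅s, g * ⁅A,B⁆ * g⁻¹⁆ = g * ⁅g⁻¹*s*g, ⁅A,B⁆⁆ * g⁻¹ := by
    simp only [commutatorElement_def]; group
  rw [key]
  have hsG : s ∈ G := by
    rcases hs with rfl | rfl
    · exact hA
    · exact hB
  exact hN g hg _ (commC_mem hN hAC _ (mul_mem (mul_mem (inv_mem hg) hsG) hg))

/-- `pairAut` as a monoid homomorphism. -/
def pairHom : treeAut × treeAut →* treeAut where
  toFun q := pairAut q.1 q.2
  map_one' := pairAut_one
  map_mul' x y := pairAut_mul x.1 x.2 y.1 y.2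

lemma pair_commutator (u v u' v' : treeAut) :
    ⁅pairAut u v, pairAut u' v'⁆ = pairAut ⁅u, u'⁆ ⁅v, v'⁆ := by
  simp only [commutatorElement_def]
  rw [pairAut_inv, pairAut_inv, ← pairAut_mul, ← pairAut_mul, ← pairAut_mul]

lemma lift1 : ∀ g ∈ G, ∃ z : treeAut, pairAut g z ∈ G := by
  intro g hg
  induction hg using Subgroup.closure_induction with
  | mem s hs =>
      rcases hs with rfl | rfl
      · exact ⟨1, by rw [← B_eq]; exact hB⟩
      · exact ⟨B, by rw [← A_mul_A]; exact mul_mem hA hA⟩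
  | one => exact ⟨1, by rw [pairAut_one]; exact one_mem G⟩
  | mul x y hx hy px py =>
      obtain ⟨z, hz⟩ := px; obtain ⟨z', hz'⟩ := py
      exact ⟨z*z', by rw [pairAut_mul]; exact mul_mem hz hz'⟩
  | inv x hx px =>
      obtain ⟨z, hz⟩ := px
      exact ⟨z⁻¹, by rw [← pairAut_inv]; exact inv_mem hz⟩

/-- The elements `t` with `⟨t,1⟩ ∈ G''`. -/
def TT : Subgroup treeAut :=
  (⁅⁅G, G⁆, ⁅G, G⁆⁆ : Subgroup treeAut).comap (pairHom.comp (MonoidHom.inl treeAut treeAut))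

lemma mem_TT {t : treeAut} : t ∈ TT ↔ pairAut t 1 ∈ ⁅⁅G, G⁆, ⁅G, G⁆⁆ := Iff.rfl

lemma normd_TT : Normd TT := by
  intro g hg t ht
  obtain ⟨z, hz⟩ := lift1 g hg
  rw [mem_TT] at ht ⊢
  have h2 : z*(1:treeAut)*z⁻¹ = 1 := by group
  have key : pairAut (g*t*g⁻¹) 1 = (pairAut g z) * pairAut t 1 * (pairAut g z)⁻¹ := by
    rw [pairAut_inv, ← pairAut_mul, ← pairAut_mul, h2]
  rw [key]
  exact normd_D2 _ hz _ ht

lemma hCinv : (⁅A, B⁆)⁻¹ = pairAut A (B*A⁻¹*B⁻¹) := by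
  have h3 : (B*A*B⁻¹)⁻¹ = B*A⁻¹*B⁻¹ := by group
  rw [C_eq, pairAut_inv, inv_inv, h3]

lemma hACT : ⁅A, ⁅A, B⁆⁆ ∈ TT := by
  rw [mem_TT]
  have h1 : ⁅(⁅A, B⁆)⁻¹, ⁅B, A*A⁆⁆ = pairAut ⁅A, ⁅A, B⁆⁆ 1 := by
    rw [hCinv, ← pairC1, pair_commutator, commutatorElement_one_right]
  rw [← h1]
  exact Subgroup.commutator_mem_commutator
    (inv_mem (Subgroup.commutator_mem_commutator hA hB))
    (Subgroup.commutator_mem_commutator hB (mul_mem hA hA))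

lemma gamma3_le_TT : ⁅G, ⁅G, G⁆⁆ ≤ TT := gamma3_le normd_TT hACT

lemma pair_mem_D2 {g h : treeAut} (hg : g ∈ ⁅G, ⁅G, G⁆⁆) (hh : h ∈ ⁅G, ⁅G, G⁆⁆) :
    pairAut g h ∈ ⁅⁅G, G⁆, ⁅G, G⁆⁆ := by
  have h1 : pairAut g 1 ∈ ⁅⁅G, G⁆, ⁅G, G⁆⁆ := gamma3_le_TT hg
  have hBh : B⁻¹*h*B ∈ ⁅G, ⁅G, G⁆⁆ := by
    have := normd_G3 B⁻¹ (inv_mem hB) h hh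
    rwa [inv_inv] at this
  have h2 : pairAut (B⁻¹*h*B) 1 ∈ ⁅⁅G, G⁆, ⁅G, G⁆⁆ := gamma3_le_TT hBh
  have h3 : pairAut 1 h ∈ ⁅⁅G, G⁆, ⁅G, G⁆⁆ := by
    have h4 : B*(B⁻¹*h*B)*B⁻¹ = h := by group
    have e : A * pairAut (B⁻¹*h*B) 1 * A⁻¹ = pairAut 1 h := by
      rw [conjA_conj, h4]
    rw [← e]
    exact normd_D2 A hA _ h2
  have e2 : pairAut g h = pairAut g 1 * pairAut 1 h := by
    rw [← pairAut_mul, mul_one, one_mul]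
  rw [e2]
  exact mul_mem h1 h3

/-- The subgroup `⟨a⟩·G'` of `G`. -/
def HH : Subgroup treeAut := Subgroup.closure ({A} ∪ (⁅G, G⁆ : Subgroup treeAut))

lemma HH_le_G : HH ≤ G := by
  rw [HH, Subgroup.closure_le]
  rintro x (rfl | hx)
  · exact hA
  · exact G2_le_G hx

lemma A_mem_HH : A ∈ HH := Subgroup.subset_closure (Or.inl rfl)

lemma G2_le_HH : ⁅G, G⁆ ≤ HH := fun x hx => Subgroup.subset_closure (Or.inr hx)

lemma normd_HH : Normd HH := by
  rw [HH]
  apply normd_closure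
  rintro g hg s (rfl | hs)
  · have key : g*A*g⁻¹ = A * ⁅A⁻¹, g⁆ := by
      simp only [commutatorElement_def]; group
    rw [key]
    exact mul_mem A_mem_HH (G2_le_HH (Subgroup.commutator_mem_commutator (inv_mem hA) hg))
  · exact Subgroup.subset_closure (Or.inr (by
      exact SetLike.mem_coe.mpr (normd_G2 g hg s (SetLike.mem_coe.mp hs))))

lemma normd_of_gen {N : Subgroup treeAut}
    (h1 : ∀ n ∈ N, A*n*A⁻¹ ∈ N) (h2 : ∀ n ∈ N, A⁻¹*n*A ∈ N)
    (h3 : ∀ n ∈ N, B*n*B⁻¹ ∈ N) (h4 : ∀ n ∈ N, B⁻¹*n*B ∈ N) : Normd N := by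
  have key : ∀ g ∈ G, (∀ n ∈ N, g*n*g⁻¹ ∈ N) ∧ (∀ n ∈ N, g⁻¹*n*g ∈ N) := by
    intro g hg
    induction hg using Subgroup.closure_induction with
    | mem s hs =>
        rcases hs with rfl | rfl
        · exact ⟨h1, h2⟩
        · exact ⟨h3, h4⟩
    | one =>
        constructor <;> · intro n hn; simpa using hn
    | mul x y hx hy px py =>
        constructor
        · intro n hn
          have e : (x*y)*n*(x*y)⁻¹ = x*(y*n*y⁻¹)*x⁻¹ := by group
          rw [e]; exact px.1 _ (py.1 n hn)
        · intro n hn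
          have e : (x*y)⁻¹*n*(x*y) = y⁻¹*(x⁻¹*n*x)*y := by group
          rw [e]; exact py.2 _ (px.2 n hn)
    | inv x hx px =>
        constructor
        · intro n hn; rw [inv_inv]; exact px.2 n hn
        · intro n hn; rw [inv_inv]; exact px.1 n hn
  exact fun g hg n hn => (key g hg).1 n hn

/-- Pairs with both coordinates in `HH`. -/
def PS : Subgroup treeAut := Subgroup.map pairHom (HH.prod HH)

lemma mem_PS {p : treeAut} : p ∈ PS ↔ ∃ u v : treeAut, u ∈ HH ∧ v ∈ HH ∧ pairAut u v = p := by
  rw [PS, Subgroup.mem_map]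
  constructor
  · rintro ⟨⟨u, v⟩, huv, rfl⟩
    exact ⟨u, v, (Subgroup.mem_prod.mp huv).1, (Subgroup.mem_prod.mp huv).2, rfl⟩
  · rintro ⟨u, v, hu, hv, rfl⟩
    exact ⟨(u, v), Subgroup.mem_prod.mpr ⟨hu, hv⟩, rfl⟩

lemma conj_HH_B {u : treeAut} (hu : u ∈ HH) : B*u*B⁻¹ ∈ HH := normd_HH B hB u hu
lemma conj_HH_Binv {u : treeAut} (hu : u ∈ HH) : B⁻¹*u*B ∈ HH := by
  have := normd_HH B⁻¹ (inv_mem hB) u hu; rwa [inv_inv] at this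
lemma conj_HH_A {u : treeAut} (hu : u ∈ HH) : A*u*A⁻¹ ∈ HH := normd_HH A hA u hu
lemma conj_HH_Ainv {u : treeAut} (hu : u ∈ HH) : A⁻¹*u*A ∈ HH := by
  have := normd_HH A⁻¹ (inv_mem hA) u hu; rwa [inv_inv] at this

lemma normd_PS : Normd PS := by
  apply normd_of_gen
  · rintro n hn
    obtain ⟨u, v, hu, hv, rfl⟩ := mem_PS.mp hn
    rw [conjA_conj]
    exact mem_PS.mpr ⟨v, _, hv, conj_HH_B hu, rfl⟩
  · rintro n hn
    obtain ⟨u, v, hu, hv, rfl⟩ := mem_PS.mp hn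
    rw [conjA_inv]
    exact mem_PS.mpr ⟨_, u, conj_HH_Binv hv, hu, rfl⟩
  · rintro n hn
    obtain ⟨u, v, hu, hv, rfl⟩ := mem_PS.mp hn
    rw [conjB_conj]
    exact mem_PS.mpr ⟨_, v, conj_HH_A hu, hv, rfl⟩
  · rintro n hn
    obtain ⟨u, v, hu, hv, rfl⟩ := mem_PS.mp hn
    rw [conjB_inv]
    exact mem_PS.mpr ⟨_, v, conj_HH_Ainv hu, hv, rfl⟩

lemma C_mem_PS : ⁅A, B⁆ ∈ PS := by
  rw [C_eq]
  exact mem_PS.mpr ⟨A⁻¹, B*A*B⁻¹, inv_mem A_mem_HH, conj_HH_B A_mem_HH, rfl⟩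

lemma G2_le_PS : ⁅G, G⁆ ≤ PS := gamma2_le normd_PS C_mem_PS

lemma commHH_le_G3 : ⁅HH, HH⁆ ≤ ⁅G, ⁅G, G⁆⁆ := by
  rw [HH]
  apply comm_le HH_le_G HH_le_G normd_G3
  rintro s (rfl | hs) t (rfl | ht)
  · rw [commutatorElement_self]; exact one_mem _
  · exact Subgroup.commutator_mem_commutator hA (SetLike.mem_coe.mp ht)
  · rw [← commutatorElement_inv]
    exact inv_mem (Subgroup.commutator_mem_commutator hA (SetLike.mem_coe.mp hs))
  · exact Subgroup.commutator_mono G2_le_G (le_refl _)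
      (Subgroup.commutator_mem_commutator (SetLike.mem_coe.mp hs) (SetLike.mem_coe.mp ht))

lemma D2_le_pair : ⁅⁅G, G⁆, ⁅G, G⁆⁆ ≤
    Subgroup.map pairHom ((⁅G, ⁅G, G⁆⁆).prod ⁅G, ⁅G, G⁆⁆) :=
  calc ⁅⁅G, G⁆, ⁅G, G⁆⁆ ≤ ⁅PS, PS⁆ := Subgroup.commutator_mono G2_le_PS G2_le_PS
    _ = Subgroup.map pairHom ⁅HH.prod HH, HH.prod HH⁆ :=
        (Subgroup.map_commutator _ _ pairHom).symm
    _ = Subgroup.map pairHom (⁅HH, HH⁆.prod ⁅HH, HH⁆) := by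
        rw [Subgroup.commutator_prod_prod]
    _ ≤ Subgroup.map pairHom ((⁅G, ⁅G, G⁆⁆).prod ⁅G, ⁅G, G⁆⁆) :=
        Subgroup.map_mono (Subgroup.prod_mono commHH_le_G3 commHH_le_G3)

/-- the second derived subgroup `G'' = [[G,G],[G,G]]` equals
`γ₃ × γ₃ = {⟨g,h⟩ : g, h ∈ γ₃}`, where `γ₃ = [G,[G,G]]` is the third term of the
lower central series of `G`. -/
theorem second_derived_eq_gamma3_times_gamma3 (p : treeAut) :
    p ∈ ⁅⁅G, G⁆, ⁅G, G⁆⁆ ↔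
      ∃ g h : treeAut, g ∈ ⁅G, ⁅G, G⁆⁆ ∧ h ∈ ⁅G, ⁅G, G⁆⁆ ∧ p = pairAut g h := by
  constructor
  · intro hp
    obtain ⟨⟨g, h⟩, hmem, heq⟩ := Subgroup.mem_map.mp (D2_le_pair hp)
    obtain ⟨hg, hh⟩ := Subgroup.mem_prod.mp hmem
    exact ⟨g, h, hg, hh, heq.symm⟩
  · rintro ⟨g, h, hg, hh, rfl⟩
    exact pair_mem_D2 hg hh
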